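/- arXiv:2305.08613 — 5 statements merged into one kernel-verified Lean document; each statement's English description precedes it below -/
import Mathlib

section
/- Let X : ℝ × ℝ → ℝ³, (s,t) ↦ X(s,t), be a smooth solution of the vortex-pair equation with X_s(s,t) ≠ 0 everywhere. Then for every s and all times t₀, t₁, one has ‖X_s(s,t₁)‖·(x₁(s,t₁)² + r_c²)^{ε/2} = ‖X_s(s,t₀)‖·(x₁(s,t₀)² + r_c²)^{ε/2}; equivalently, the quantity ‖X_s(s,t)‖·(x₁(s,t)² + r_c²)^{ε/2} is independent of t (so ‖X_s(s,t)‖ = L₀(s)·(x₁(s,t)² + r_c²)^{-ε/2} for a function L₀ of s alone). -/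
noncomputable def cross3 (a b : Fin 3 → ℝ) : Fin 3 → ℝ :=
  ![a 1 * b 2 - a 2 * b 1, a 2 * b 0 - a 0 * b 2, a 0 * b 1 - a 1 * b 0]

noncomputable def norm3 (a : Fin 3 → ℝ) : ℝ :=
  Real.sqrt ((a 0) ^ 2 + (a 1) ^ 2 + (a 2) ^ 2)

noncomputable def e1 : Fin 3 → ℝ := ![1, 0, 0]

def dot3 (a b : Fin 3 → ℝ) : ℝ := a 0 * b 0 + a 1 * b 1 + a 2 * b 2

lemma dot3_self_rhs (u w : Fin 3 → ℝ) (a B : ℝ) :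
    dot3 u (a • cross3 u w - B • cross3 u e1) = 0 := by
  simp [dot3, cross3, e1]; ring

lemma dot3_w_rhs (u w : Fin 3 → ℝ) (a B : ℝ) :
    dot3 w (a • cross3 u w - B • cross3 u e1) = B * cross3 u w 0 := by
  simp [dot3, cross3, e1]; ring

lemma rhs_apply0 (u w : Fin 3 → ℝ) (a B : ℝ) :
    (a • cross3 u w - B • cross3 u e1) 0 = a * cross3 u w 0 := by
  simp [cross3, e1]

lemma dot3_comm (a b : Fin 3 → ℝ) : dot3 a b = dot3 b a := by
  simp [dot3]; ring

lemma dot3_self_nonneg (a : Fin 3 → ℝ) : 0 ≤ dot3 a a := by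
  have := mul_self_nonneg (a 0); have := mul_self_nonneg (a 1); have := mul_self_nonneg (a 2)
  unfold dot3; linarith

lemma dot3_self_pos {a : Fin 3 → ℝ} (h : a ≠ 0) : 0 < dot3 a a := by
  rcases Function.ne_iff.1 h with ⟨i, hi⟩
  have h0 := mul_self_nonneg (a 0); have h1 := mul_self_nonneg (a 1); have h2 := mul_self_nonneg (a 2)
  unfold dot3
  fin_cases i
  · nlinarith [mul_self_pos.2 (show a 0 ≠ 0 by simpa using hi)]
  · nlinarith [mul_self_pos.2 (show a 1 ≠ 0 by simpa using hi)]
  · nlinarith [mul_self_pos.2 (show a 2 ≠ 0 by simpa using hi)]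

lemma norm3_eq_sqrt (a : Fin 3 → ℝ) : norm3 a = Real.sqrt (dot3 a a) := by
  simp [norm3, dot3, pow_two]

lemma sq_norm3 (a : Fin 3 → ℝ) : norm3 a ^ 2 = dot3 a a := by
  rw [norm3_eq_sqrt, Real.sq_sqrt (dot3_self_nonneg a)]

lemma hasDerivAt_dot3 {p q : ℝ → Fin 3 → ℝ} {p' q' : Fin 3 → ℝ} {x : ℝ}
    (hp : ∀ i, HasDerivAt (fun τ => p τ i) (p' i) x)
    (hq : ∀ i, HasDerivAt (fun τ => q τ i) (q' i) x) :
    HasDerivAt (fun τ => dot3 (p τ) (q τ)) (dot3 p' (q x) + dot3 (p x) q') x := by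
  have h := (((hp 0).mul (hq 0)).add ((hp 1).mul (hq 1))).add ((hp 2).mul (hq 2))
  exact h.congr_deriv (by unfold dot3; ring)

lemma hasDerivAt_proj {F : ℝ → Fin 3 → ℝ} {d : Fin 3 → ℝ} {x : ℝ} (h : HasDerivAt F d x)
    (i : Fin 3) : HasDerivAt (fun τ => F τ i) (d i) x :=
  (ContinuousLinearMap.proj (R := ℝ) (φ := fun _ : Fin 3 => ℝ) i).hasFDerivAt.comp_hasDerivAt x h

/-- for a smooth solution of the vortex-pair equation with nonvanishing
tangent, the quantity `‖X_s‖ · (x₁² + r_c²)^{ε/2}` is independent of time. -/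
theorem stmt0 (ε rc : ℝ) (hε : 0 < ε) (hrc : 0 < rc)
    (X : ℝ → ℝ → Fin 3 → ℝ)
    (hX : ContDiff ℝ (⊤ : ℕ∞) (fun p : ℝ × ℝ => X p.1 p.2))
    (hXs : ∀ s t, deriv (fun σ => X σ t) s ≠ 0)
    (hPDE : ∀ s t,
      deriv (fun τ => X s τ) t =
        (1 / norm3 (deriv (fun σ => X σ t) s) ^ 3) •
          cross3 (deriv (fun σ => X σ t) s)
            (deriv (fun σ => deriv (fun σ' => X σ' t) σ) s)
        - (ε * X s t 0 / ((X s t 0) ^ 2 + rc ^ 2) / norm3 (deriv (fun σ => X σ t) s)) •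
          cross3 (deriv (fun σ => X σ t) s) e1) :
    ∀ s t₀ t₁ : ℝ,
      norm3 (deriv (fun σ => X σ t₁) s) * ((X s t₁ 0) ^ 2 + rc ^ 2) ^ (ε / 2)
        = norm3 (deriv (fun σ => X σ t₀) s) * ((X s t₀ 0) ^ 2 + rc ^ 2) ^ (ε / 2) := by
  intro s t₀ t₁
  set f : ℝ × ℝ → (Fin 3 → ℝ) := fun p => X p.1 p.2 with hf_def
  have hfd : ∀ p, HasFDerivAt f (fderiv ℝ f p) p :=
    fun p => (hX.differentiable (by simp) p).hasFDerivAt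
  have hf' : ContDiff ℝ (⊤ : ℕ∞) (fderiv ℝ f) := hX.fderiv_right (by simp)
  have hf'd : ∀ p, HasFDerivAt (fderiv ℝ f) (fderiv ℝ (fderiv ℝ f) p) p :=
    fun p => (hf'.differentiable (by simp) p).hasFDerivAt
  have hsline : ∀ σ t : ℝ, HasDerivAt (fun z : ℝ => ((z, t) : ℝ × ℝ)) (1, 0) σ :=
    fun σ t => (hasDerivAt_id σ).prodMk (hasDerivAt_const σ t)
  have htline : ∀ σ t : ℝ, HasDerivAt (fun z : ℝ => ((σ, z) : ℝ × ℝ)) (0, 1) t :=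
    fun σ t => (hasDerivAt_const t σ).prodMk (hasDerivAt_id t)
  -- first partials
  have hu : ∀ σ t, HasDerivAt (fun σ' => X σ' t) (fderiv ℝ f (σ, t) (1, 0)) σ :=
    fun σ t => by have := (hfd (σ, t)).comp_hasDerivAt σ (hsline σ t); exact this
  have hv : ∀ σ t, HasDerivAt (fun τ => X σ τ) (fderiv ℝ f (σ, t) (0, 1)) t :=
    fun σ t => by have := (hfd (σ, t)).comp_hasDerivAt t (htline σ t); exact this
  have hu_eq : ∀ σ t, deriv (fun σ' => X σ' t) σ = fderiv ℝ f (σ, t) (1, 0) :=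
    fun σ t => (hu σ t).deriv
  have hv_eq : ∀ σ t, deriv (fun τ => X σ τ) t = fderiv ℝ f (σ, t) (0, 1) :=
    fun σ t => (hv σ t).deriv
  -- second partials
  have huu : ∀ σ t, HasDerivAt (fun σ' => deriv (fun σ'' => X σ'' t) σ')
      (fderiv ℝ (fderiv ℝ f) (σ, t) (1, 0) (1, 0)) σ := by
    intro σ t
    have h : HasDerivAt (fun z => fderiv ℝ f (z, t) (1, 0))
        (fderiv ℝ (fderiv ℝ f) (σ, t) (1, 0) (1, 0)) σ :=
      (ContinuousLinearMap.apply ℝ (Fin 3 → ℝ) ((1:ℝ), (0:ℝ))).hasFDerivAt.comp_hasDerivAt σ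
        ((hf'd (σ, t)).comp_hasDerivAt σ (hsline σ t))
    have he : (fun σ' => deriv (fun σ'' => X σ'' t) σ') = fun σ' => fderiv ℝ f (σ', t) (1, 0) :=
      funext fun σ' => hu_eq σ' t
    rw [he]; exact h
  have hut : ∀ σ t, HasDerivAt (fun τ => deriv (fun σ'' => X σ'' τ) σ)
      (fderiv ℝ (fderiv ℝ f) (σ, t) (0, 1) (1, 0)) t := by
    intro σ t
    have h : HasDerivAt (fun τ => fderiv ℝ f (σ, τ) (1, 0))
        (fderiv ℝ (fderiv ℝ f) (σ, t) (0, 1) (1, 0)) t :=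
      (ContinuousLinearMap.apply ℝ (Fin 3 → ℝ) ((1:ℝ), (0:ℝ))).hasFDerivAt.comp_hasDerivAt t
        ((hf'd (σ, t)).comp_hasDerivAt t (htline σ t))
    have he : (fun τ => deriv (fun σ'' => X σ'' τ) σ) = fun τ => fderiv ℝ f (σ, τ) (1, 0) :=
      funext fun τ => hu_eq σ τ
    rw [he]; exact h
  have hvs : ∀ σ t, HasDerivAt (fun σ' => deriv (fun τ => X σ' τ) t)
      (fderiv ℝ (fderiv ℝ f) (σ, t) (1, 0) (0, 1)) σ := by
    intro σ t
    have h : HasDerivAt (fun z => fderiv ℝ f (z, t) (0, 1))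
        (fderiv ℝ (fderiv ℝ f) (σ, t) (1, 0) (0, 1)) σ :=
      (ContinuousLinearMap.apply ℝ (Fin 3 → ℝ) ((0:ℝ), (1:ℝ))).hasFDerivAt.comp_hasDerivAt σ
        ((hf'd (σ, t)).comp_hasDerivAt σ (hsline σ t))
    have he : (fun σ' => deriv (fun τ => X σ' τ) t) = fun σ' => fderiv ℝ f (σ', t) (0, 1) :=
      funext fun σ' => hv_eq σ' t
    rw [he]; exact h
  -- Clairaut
  have hsym : ∀ σ t, fderiv ℝ (fderiv ℝ f) (σ, t) (0, 1) (1, 0)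
      = fderiv ℝ (fderiv ℝ f) (σ, t) (1, 0) (0, 1) :=
    fun σ t => second_derivative_symmetric hfd (hf'd (σ, t)) _ _
  -- quantities at a fixed time
  have hg_pos : ∀ t, 0 < dot3 (deriv (fun σ => X σ t) s) (deriv (fun σ => X σ t) s) :=
    fun t => dot3_self_pos (hXs s t)
  have hn_pos : ∀ t, 0 < norm3 (deriv (fun σ => X σ t) s) := by
    intro t; rw [norm3_eq_sqrt]; exact Real.sqrt_pos.2 (hg_pos t)
  have hq_pos : ∀ t, 0 < (X s t 0) ^ 2 + rc ^ 2 := by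
    intro t; positivity
  -- key conservation identity for the "u · u_t" term
  have hkey : ∀ t,
      dot3 (deriv (fun σ => X σ t) s) (fderiv ℝ (fderiv ℝ f) (s, t) (0, 1) (1, 0))
        = -((ε * X s t 0 / ((X s t 0) ^ 2 + rc ^ 2) / norm3 (deriv (fun σ => X σ t) s))
            * cross3 (deriv (fun σ => X σ t) s)
                (deriv (fun σ => deriv (fun σ' => X σ' t) σ) s) 0) := by
    intro t
    have h0 : ∀ σ, dot3 (deriv (fun σ' => X σ' t) σ) (deriv (fun τ => X σ τ) t) = 0 := by
      intro σ; rw [hPDE σ t]; exact dot3_self_rhs _ _ _ _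
    have hD : HasDerivAt
        (fun σ => dot3 (deriv (fun σ' => X σ' t) σ) (deriv (fun τ => X σ τ) t))
        (dot3 (fderiv ℝ (fderiv ℝ f) (s, t) (1, 0) (1, 0)) (deriv (fun τ => X s τ) t)
          + dot3 (deriv (fun σ' => X σ' t) s) (fderiv ℝ (fderiv ℝ f) (s, t) (1, 0) (0, 1))) s :=
      hasDerivAt_dot3 (fun i => hasDerivAt_proj (huu s t) i)
        (fun i => hasDerivAt_proj (hvs s t) i)
    have hfun0 : (fun σ => dot3 (deriv (fun σ' => X σ' t) σ) (deriv (fun τ => X σ τ) t))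
        = fun _ : ℝ => (0:ℝ) := funext h0
    rw [hfun0] at hD
    have hzero := hD.unique (hasDerivAt_const s (0:ℝ))
    have hW_eq : deriv (fun σ => deriv (fun σ' => X σ' t) σ) s
        = fderiv ℝ (fderiv ℝ f) (s, t) (1, 0) (1, 0) := (huu s t).deriv
    rw [← hW_eq, hPDE s t, dot3_w_rhs] at hzero
    rw [hsym s t]
    linarith [hzero]
  -- derivative of the first coordinate
  have hx' : ∀ t, HasDerivAt (fun τ => X s τ 0)
      ((1 / norm3 (deriv (fun σ => X σ t) s) ^ 3)
        * cross3 (deriv (fun σ => X σ t) s)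
            (deriv (fun σ => deriv (fun σ' => X σ' t) σ) s) 0) t := by
    intro t
    have h := hasDerivAt_proj (hv s t) 0
    rw [← hv_eq s t, hPDE s t, rhs_apply0] at h
    exact h
  -- derivative of g
  have hg' : ∀ t, HasDerivAt
      (fun τ => dot3 (deriv (fun σ => X σ τ) s) (deriv (fun σ => X σ τ) s))
      (dot3 (fderiv ℝ (fderiv ℝ f) (s, t) (0, 1) (1, 0)) (deriv (fun σ => X σ t) s)
        + dot3 (deriv (fun σ => X σ t) s) (fderiv ℝ (fderiv ℝ f) (s, t) (0, 1) (1, 0))) t :=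
    fun t => hasDerivAt_dot3 (fun i => hasDerivAt_proj (hut s t) i)
      (fun i => hasDerivAt_proj (hut s t) i)
  -- derivative of q = x² + rc²
  have hq' : ∀ t, HasDerivAt (fun τ => (X s τ 0) ^ 2 + rc ^ 2)
      (2 * X s t 0 * ((1 / norm3 (deriv (fun σ => X σ t) s) ^ 3)
        * cross3 (deriv (fun σ => X σ t) s)
            (deriv (fun σ => deriv (fun σ' => X σ' t) σ) s) 0)) t := by
    intro t
    have h := ((hx' t).pow 2).add_const (rc ^ 2)
    refine h.congr_deriv ?_
    push_cast
    ring
  -- derivative of G = g * q^ε is zero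
  have hG : ∀ t, HasDerivAt
      (fun τ => dot3 (deriv (fun σ => X σ τ) s) (deriv (fun σ => X σ τ) s)
        * ((X s τ 0) ^ 2 + rc ^ 2) ^ ε) 0 t := by
    intro t
    have hrp : HasDerivAt (fun τ => ((X s τ 0) ^ 2 + rc ^ 2) ^ ε)
        ((ε * ((X s t 0) ^ 2 + rc ^ 2) ^ (ε - 1))
          * (2 * X s t 0 * ((1 / norm3 (deriv (fun σ => X σ t) s) ^ 3)
            * cross3 (deriv (fun σ => X σ t) s)
                (deriv (fun σ => deriv (fun σ' => X σ' t) σ) s) 0))) t :=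
      by have := (Real.hasDerivAt_rpow_const (p := ε) (Or.inl (hq_pos t).ne')).comp t (hq' t); exact this
    have h := (hg' t).mul hrp
    refine h.congr_deriv ?_
    symm
    set n := norm3 (deriv (fun σ => X σ t) s) with hn
    set c := cross3 (deriv (fun σ => X σ t) s)
        (deriv (fun σ => deriv (fun σ' => X σ' t) σ) s) 0 with hc
    set q := (X s t 0) ^ 2 + rc ^ 2 with hq
    rw [dot3_comm (fderiv ℝ (fderiv ℝ f) (s, t) (0, 1) (1, 0)) (deriv (fun σ => X σ t) s),
      hkey t]
    rw [← hn, ← hc, ← hq]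
    have hgn : dot3 (deriv (fun σ => X σ t) s) (deriv (fun σ => X σ t) s) = n ^ 2 :=
      (sq_norm3 _).symm
    rw [hgn]
    have hn0 : n ≠ 0 := (hn_pos t).ne'
    have hq0 : q ≠ 0 := (hq_pos t).ne'
    have hqe : q ^ ε = q ^ (ε - 1) * q := by
      rw [Real.rpow_sub_one hq0]; field_simp
    rw [hqe]
    field_simp
    ring
  -- G is constant
  have hdiff : Differentiable ℝ (fun τ =>
      dot3 (deriv (fun σ => X σ τ) s) (deriv (fun σ => X σ τ) s)
        * ((X s τ 0) ^ 2 + rc ^ 2) ^ ε) := fun t => (hG t).differentiableAt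
  have hconst := is_const_of_deriv_eq_zero hdiff (fun t => (hG t).deriv) t₁ t₀
  -- convert the conserved quantity to the stated form
  have hform : ∀ t, norm3 (deriv (fun σ => X σ t) s) * ((X s t 0) ^ 2 + rc ^ 2) ^ (ε / 2)
      = Real.sqrt (dot3 (deriv (fun σ => X σ t) s) (deriv (fun σ => X σ t) s)
          * ((X s t 0) ^ 2 + rc ^ 2) ^ ε) := by
    intro t
    rw [norm3_eq_sqrt, Real.sqrt_mul (dot3_self_nonneg _)]
    congr 1
    rw [Real.sqrt_eq_rpow, ← Real.rpow_mul (hq_pos t).le]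
    congr 1
    ring
  rw [hform t₀, hform t₁, hconst]
end

section
/- Fix ε > 0, b > 0, r_c > 0 and ω ≠ 0, and consider the real 3×3 matrix M with rows (0, ω², 0), (−ω² − ε(r_c² − b²)/(b² + r_c²)², 0, 0), (0, −ε b/(b² + r_c²), 0) arising from the linear stability analysis of the straight vortex pair. Then M has an eigenvalue with strictly positive real part (i.e. the Crow instability occurs) if and only if ω² < ε (b² − r_c²)/(b² + r_c²)². -/
/-! The matrix has characteristic polynomial `-ν (ν² - ω² q)`, where `q` is its `(1,0)` entry,
so its nonzero eigenvalues are the square roots of the real number `ω² q`. A square root of a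
real number can lie in the open right half-plane only if that number is positive, and then the
positive real root does. Since `ω² > 0`, instability amounts to
`q = ε (b² - r_c²) / (b² + r_c²)² - ω² > 0`. -/

namespace Complex

theorem exists_re_pos_sq_eq_ofReal_iff (r : ℝ) : (∃ ν : ℂ, 0 < ν.re ∧ ν ^ 2 = r) ↔ 0 < r := by
  constructor
  · rintro ⟨ν, hre, hsq⟩
    have him : ν.re * ν.im + ν.im * ν.re = 0 := by simpa [sq, mul_im] using congrArg im hsq
    have hν : ν.im = 0 := (mul_eq_zero.mp (by linarith : ν.re * ν.im = 0)).resolve_left hre.ne'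
    have hr : ν.re * ν.re = r := by simpa [sq, mul_re, hν] using congrArg re hsq
    rw [← hr]
    exact mul_pos hre hre
  · intro hr
    refine ⟨(Real.sqrt r : ℂ), by simpa using hr, ?_⟩
    rw [← ofReal_pow, Real.sq_sqrt hr.le]

end Complex

theorem det_map_ofReal_sub_smul_one (p q s : ℝ) (ν : ℂ) :
    ((!![0, p, 0; q, 0, 0; 0, s, 0] : Matrix (Fin 3) (Fin 3) ℝ).map (fun x => (x : ℂ))
      - ν • 1).det = -ν * (ν ^ 2 - ((p * q : ℝ) : ℂ)) := by
  simp [Matrix.det_fin_three]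
  ring

theorem exists_eigenvalue_re_pos_iff (p q s : ℝ) :
    (∃ ν : ℂ, 0 < ν.re ∧
      ((!![0, p, 0; q, 0, 0; 0, s, 0] : Matrix (Fin 3) (Fin 3) ℝ).map (fun x => (x : ℂ))
        - ν • 1).det = 0) ↔ 0 < p * q := by
  rw [← Complex.exists_re_pos_sq_eq_ofReal_iff]
  refine exists_congr fun ν => and_congr_right fun hre => ?_
  have hν : ν ≠ 0 := fun h => by simp [h] at hre
  rw [det_map_ofReal_sub_smul_one, mul_eq_zero, sub_eq_zero]
  simp [hν]

theorem stmt4_general (ε b rc ω : ℝ) (hω : ω ≠ 0)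
    (M : Matrix (Fin 3) (Fin 3) ℝ)
    (hM : M = !![0, ω ^ 2, 0;
                 -ω ^ 2 - ε * (rc ^ 2 - b ^ 2) / (b ^ 2 + rc ^ 2) ^ 2, 0, 0;
                 0, -(ε * b) / (b ^ 2 + rc ^ 2), 0]) :
    (∃ ν : ℂ, 0 < ν.re ∧ (M.map (fun x => (x : ℂ)) - ν • 1).det = 0) ↔
      ω ^ 2 < ε * (b ^ 2 - rc ^ 2) / (b ^ 2 + rc ^ 2) ^ 2 := by
  have hq : -ω ^ 2 - ε * (rc ^ 2 - b ^ 2) / (b ^ 2 + rc ^ 2) ^ 2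
      = ε * (b ^ 2 - rc ^ 2) / (b ^ 2 + rc ^ 2) ^ 2 - ω ^ 2 := by ring
  rw [hM, hq, exists_eigenvalue_re_pos_iff, mul_pos_iff_of_pos_left (by positivity), sub_pos]

/-- the stability matrix of the straight vortex pair has an eigenvalue with
strictly positive real part iff `ω² < ε(b² − r_c²)/(b² + r_c²)²` (Crow instability). -/
theorem stmt4 (ε b rc ω : ℝ) (hε : 0 < ε) (hb : 0 < b) (hrc : 0 < rc) (hω : ω ≠ 0)
    (M : Matrix (Fin 3) (Fin 3) ℝ)
    (hM : M = !![0, ω ^ 2, 0;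
                 -ω ^ 2 - ε * (rc ^ 2 - b ^ 2) / (b ^ 2 + rc ^ 2) ^ 2, 0, 0;
                 0, -(ε * b) / (b ^ 2 + rc ^ 2), 0]) :
    (∃ ν : ℂ, 0 < ν.re ∧ (M.map (fun x => (x : ℂ)) - ν • 1).det = 0) ↔
      ω ^ 2 < ε * (b ^ 2 - rc ^ 2) / (b ^ 2 + rc ^ 2) ^ 2 :=
  stmt4_general ε b rc ω hω M hM
end

section
/- Let ε > 0 and let G : ℝ → ℝ³ be a twice continuously differentiable curve with components (G₁,G₂,G₃) such that G₁(η) ≠ 0 and G'(η) ≠ 0 for all η. Define X(s,t) = √t · G(s/√t) for t > 0. Then X satisfies the unregularized vortex-pair equation X_t = (X_s × X_ss)/‖X_s‖³ − (ε/x₁)·(X_s × e₁)/‖X_s‖ for all s ∈ ℝ and t > 0 if and only if G satisfies the ODE (1/2)G(η) − (η/2)G'(η) = (G'(η) × G''(η))/‖G'(η)‖³ − (ε/G₁(η))·(G'(η) × e₁)/‖G'(η)‖ for all η ∈ ℝ. -/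
/-!
Both sides of the vortex-pair equation scale like `t^{-1/2}` under `X(s,t) = √t G(s/√t)`:
with `η = s/√t` one has `X_s = G'(η)`, `X_ss = G''(η)/√t`, `x₁ = √t G₁(η)` and
`X_t = (G(η)/2 − (η/2) G'(η))/√t`. Cancelling the common factor `1/√t` turns the equation at
`(s, t)` into the profile equation at `η`, and every `η` is reached (e.g. with `t = 1`).
-/

section Rescaling

variable {𝕜 E : Type*} [NontriviallyNormedField 𝕜] [NormedAddCommGroup E] [NormedSpace 𝕜 E]

theorem deriv_comp_div_const (c : 𝕜) (f : 𝕜 → E) (x : 𝕜) :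
    deriv (fun y => f (y / c)) x = c⁻¹ • deriv f (x / c) := by
  simpa only [div_eq_inv_mul] using deriv_comp_mul_left c⁻¹ f x

theorem deriv_smul_comp_div_self {c : 𝕜} (hc : c ≠ 0) (f : 𝕜 → E) (x : 𝕜) :
    deriv (fun y => c • f (y / c)) x = deriv f (x / c) := by
  rw [deriv_fun_const_smul_field, deriv_comp_div_const, smul_inv_smul₀ hc]

end Rescaling

theorem hasDerivAt_sqrt_smul_comp_div_sqrt {E : Type*} [NormedAddCommGroup E] [NormedSpace ℝ E]
    {G : ℝ → E} {G' : E} {s t : ℝ} (ht : 0 < t) (hG : HasDerivAt G G' (s / √t)) :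
    HasDerivAt (fun τ => √τ • G (s / √τ))
      ((√t)⁻¹ • ((1 / 2 : ℝ) • G (s / √t) - (s / √t / 2) • G')) t := by
  have hc : 0 < √t := Real.sqrt_pos.mpr ht
  have hsqrt : HasDerivAt Real.sqrt (1 / (2 * √t)) t := Real.hasDerivAt_sqrt ht.ne'
  have hη := (hasDerivAt_const t s).div hsqrt hc.ne'
  refine (hsqrt.smul (hG.scomp t hη)).congr_deriv ?_
  rw [Function.comp_apply]
  match_scalars
  · field_simp
    ring
  · field_simp

noncomputable def vortexPairRHS (ε x₁ : ℝ) (Xs Xss : Fin 3 → ℝ) : Fin 3 → ℝ :=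
  (1 / norm3 Xs ^ 3) • cross3 Xs Xss - (ε / x₁ / norm3 Xs) • cross3 Xs e1

theorem cross3_smul_right (r : ℝ) (a b : Fin 3 → ℝ) : cross3 a (r • b) = r • cross3 a b := by
  ext i
  fin_cases i <;>
    simp only [cross3, Fin.isValue, Pi.smul_apply, smul_eq_mul, Fin.zero_eta, Fin.mk_one,
      Fin.reduceFinMk, Matrix.cons_val, Matrix.cons_val_zero, Matrix.cons_val_one] <;>
    ring

theorem vortexPairRHS_mul_smul_inv (ε c x₁ : ℝ) (Xs Xss : Fin 3 → ℝ) :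
    vortexPairRHS ε (c * x₁) Xs (c⁻¹ • Xss) = c⁻¹ • vortexPairRHS ε x₁ Xs Xss := by
  have hcoeff : ε / (c * x₁) / norm3 Xs = c⁻¹ * (ε / x₁ / norm3 Xs) := by
    simp only [div_eq_mul_inv, mul_inv]
    ring
  rw [vortexPairRHS, vortexPairRHS, cross3_smul_right, hcoeff, mul_smul, smul_comm _ c⁻¹,
    ← smul_sub]

theorem vortexPair_iff_profile_at {ε : ℝ} {G : ℝ → Fin 3 → ℝ} {X : ℝ → ℝ → Fin 3 → ℝ}
    (hX : ∀ s t, X s t = √t • G (s / √t)) {s t : ℝ} (ht : 0 < t)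
    (hG : DifferentiableAt ℝ G (s / √t)) :
    deriv (fun τ => X s τ) t =
        vortexPairRHS ε (X s t 0) (deriv (fun σ => X σ t) s)
          (deriv (fun σ => deriv (fun σ' => X σ' t) σ) s) ↔
      (1 / 2 : ℝ) • G (s / √t) - (s / √t / 2) • deriv G (s / √t) =
        vortexPairRHS ε (G (s / √t) 0) (deriv G (s / √t)) (deriv (deriv G) (s / √t)) := by
  obtain rfl : X = fun s t => √t • G (s / √t) := funext₂ hX
  beta_reduce
  have hc : √t ≠ 0 := (Real.sqrt_pos.mpr ht).ne'
  have hXs : (fun σ => deriv (fun σ' => √t • G (σ' / √t)) σ) = fun σ => deriv G (σ / √t) :=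
    funext (deriv_smul_comp_div_self hc G)
  rw [(hasDerivAt_sqrt_smul_comp_div_sqrt ht hG.hasDerivAt).deriv, hXs,
    deriv_comp_div_const, deriv_smul_comp_div_self hc, Pi.smul_apply, smul_eq_mul,
    vortexPairRHS_mul_smul_inv]
  exact (smul_right_injective _ (inv_ne_zero hc)).eq_iff

theorem stmt6_general (ε : ℝ)
    (G : ℝ → Fin 3 → ℝ) (hG : ContDiff ℝ 2 G)
    (X : ℝ → ℝ → Fin 3 → ℝ)
    (hX : ∀ s t, X s t = Real.sqrt t • G (s / Real.sqrt t)) :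
    (∀ s t : ℝ, 0 < t →
      deriv (fun τ => X s τ) t =
        (1 / norm3 (deriv (fun σ => X σ t) s) ^ 3) •
          cross3 (deriv (fun σ => X σ t) s)
            (deriv (fun σ => deriv (fun σ' => X σ' t) σ) s)
        - (ε / X s t 0 / norm3 (deriv (fun σ => X σ t) s)) •
          cross3 (deriv (fun σ => X σ t) s) e1)
    ↔ (∀ η : ℝ,
        (1 / 2 : ℝ) • G η - (η / 2) • deriv G η =
          (1 / norm3 (deriv G η) ^ 3) • cross3 (deriv G η) (deriv (deriv G) η)
          - (ε / G η 0 / norm3 (deriv G η)) • cross3 (deriv G η) e1) := by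
  have hdG : Differentiable ℝ G := hG.differentiable (by norm_num)
  refine ⟨fun h η => ?_, fun h s t ht => (vortexPair_iff_profile_at hX ht (hdG _)).mpr (h _)⟩
  have := (vortexPair_iff_profile_at hX one_pos (hdG _)).mp (h η 1 one_pos)
  rwa [Real.sqrt_one, div_one] at this

/-- `X(s,t) = √t · G(s/√t)` solves the unregularized vortex-pair equation for
all `s` and `t > 0` iff `G` solves the self-similar ODE
`G/2 − (η/2)G' = (G' × G'')/‖G'‖³ − (ε/G₁)(G' × e₁)/‖G'‖`. -/
theorem stmt6 (ε : ℝ) (hε : 0 < ε)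
    (G : ℝ → Fin 3 → ℝ) (hG : ContDiff ℝ 2 G)
    (hG1 : ∀ η, G η 0 ≠ 0) (hG' : ∀ η, deriv G η ≠ 0)
    (X : ℝ → ℝ → Fin 3 → ℝ)
    (hX : ∀ s t, X s t = Real.sqrt t • G (s / Real.sqrt t)) :
    (∀ s t : ℝ, 0 < t →
      deriv (fun τ => X s τ) t =
        (1 / norm3 (deriv (fun σ => X σ t) s) ^ 3) •
          cross3 (deriv (fun σ => X σ t) s)
            (deriv (fun σ => deriv (fun σ' => X σ' t) σ) s)
        - (ε / X s t 0 / norm3 (deriv (fun σ => X σ t) s)) •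
          cross3 (deriv (fun σ => X σ t) s) e1)
    ↔ (∀ η : ℝ,
        (1 / 2 : ℝ) • G η - (η / 2) • deriv G η =
          (1 / norm3 (deriv G η) ^ 3) • cross3 (deriv G η) (deriv (deriv G) η)
          - (ε / G η 0 / norm3 (deriv G η)) • cross3 (deriv G η) e1) :=
  stmt6_general ε G hG X hX
end

section
/- Let 0 < ε, b > 0, set s = πb/√ε, let x₁ : [0,s] → ℝ be continuously differentiable with x₁(0) = 0, x₁' ≥ 0 and x₁(s) ≥ b, and let L₀ : [0,s] → ℝ be continuous, strictly positive, with L₀(q) ≤ b^ε for all q. Then sup_{q ∈ [0,s]} x₁'(q)·x₁(q)^ε / L₀(q) ≥ √ε / ((1+ε)π). (Thus near the reconnection the tangent direction ratio |T₁|/‖T‖ is bounded below by √ε/((1+ε)π), independent of the curve.) -/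
/-!
Let `S` be the supremum; `S ≥ 0` because the ratio vanishes at `q = 0`. Since `L₀ ≤ b^ε`,
the bound `x₁'·x₁^ε ≤ S·L₀ ≤ S·b^ε` holds on `[0,s]`, and `x₁'·x₁^ε` is the derivative of `x₁^(1+ε)/(1+ε)`. Integrating over `[0,s]` gives
`b^(1+ε) ≤ x₁(s)^(1+ε) ≤ (1+ε)·S·b^ε·s = (1+ε)·S·b^(1+ε)·π/√ε`.
-/

open Set

theorem rpow_one_add_sub_le_of_deriv_mul_rpow_le {x : ℝ → ℝ} {a c ε M : ℝ} (hε : 0 ≤ ε)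
    (hac : a ≤ c) (hx : ContinuousOn x (Icc a c)) (hxd : DifferentiableOn ℝ x (Ioo a c))
    (hM : ∀ q ∈ Ioo a c, deriv x q * x q ^ ε ≤ M) :
    x c ^ (1 + ε) - x a ^ (1 + ε) ≤ (1 + ε) * M * (c - a) := by
  have hderiv : ∀ q ∈ Ioo a c,
      HasDerivAt (fun y => x y ^ (1 + ε)) (deriv x q * (1 + ε) * x q ^ ε) q := by
    intro q hq
    have := ((hxd q hq).differentiableAt (Ioo_mem_nhds hq.1 hq.2)).hasDerivAt.rpow_const
      (p := 1 + ε) (Or.inr (by linarith))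
    rwa [add_sub_cancel_left] at this
  rw [← interior_Icc] at hderiv
  refine (convex_Icc a c).image_sub_le_mul_sub_of_deriv_le
    (hx.rpow_const fun _ _ => Or.inr (by linarith))
    (fun q hq => (hderiv q hq).differentiableAt.differentiableWithinAt)
    (fun q hq => ?_) a (left_mem_Icc.2 hac) c (right_mem_Icc.2 hac) hac
  rw [(hderiv q hq).deriv, interior_Icc] at *
  nlinarith [hM q hq]

theorem le_sSup_image_div_mul {α : Type*} {K : Set α} {N L : α → ℝ} {B : ℝ}
    (hbdd : BddAbove ((fun q => N q / L q) '' K))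
    (hS : 0 ≤ sSup ((fun q => N q / L q) '' K)) {q : α} (hq : q ∈ K) (hLq : 0 < L q)
    (hLB : L q ≤ B) : N q ≤ sSup ((fun q => N q / L q) '' K) * B :=
  calc N q = N q / L q * L q := (div_mul_cancel₀ _ hLq.ne').symm
    _ ≤ sSup ((fun q => N q / L q) '' K) * L q :=
      mul_le_mul_of_nonneg_right (le_csSup hbdd ⟨q, hq, rfl⟩) hLq.le
    _ ≤ sSup ((fun q => N q / L q) '' K) * B := mul_le_mul_of_nonneg_left hLB hS

theorem stmt11_general (ε b : ℝ) (hε : 0 < ε) (hb : 0 < b)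
    (s : ℝ) (hs : s = Real.pi * b / Real.sqrt ε)
    (x₁ L₀ : ℝ → ℝ)
    (hx : ContDiffOn ℝ 1 x₁ (Set.Icc 0 s))
    (hx0 : x₁ 0 = 0)
    (hxs : b ≤ x₁ s)
    (hL : ContinuousOn L₀ (Set.Icc 0 s))
    (hLpos : ∀ q ∈ Set.Icc 0 s, 0 < L₀ q)
    (hLb : ∀ q ∈ Set.Icc 0 s, L₀ q ≤ b ^ ε) :
    Real.sqrt ε / ((1 + ε) * Real.pi)
      ≤ sSup ((fun q => derivWithin x₁ (Set.Icc 0 s) q * x₁ q ^ ε / L₀ q) '' Set.Icc 0 s) := by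
  set S := sSup ((fun q => derivWithin x₁ (Icc 0 s) q * x₁ q ^ ε / L₀ q) '' Icc 0 s)
  have hs_pos : 0 < s := by rw [hs]; positivity
  have hbdd := isCompact_Icc.bddAbove_image <|
    ((hx.continuousOn_derivWithin (uniqueDiffOn_Icc hs_pos) le_rfl).mul
      (hx.continuousOn.rpow_const fun _ _ => Or.inr hε.le)).div hL fun q hq => (hLpos q hq).ne'
  have hS : 0 ≤ S := by
    refine le_of_eq_of_le ?_ (le_csSup hbdd ⟨0, left_mem_Icc.2 hs_pos.le, rfl⟩)
    simp [hx0, Real.zero_rpow hε.ne']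
  have hgrowth := rpow_one_add_sub_le_of_deriv_mul_rpow_le (M := S * b ^ ε) hε.le hs_pos.le
    hx.continuousOn (hx.differentiableOn one_ne_zero |>.mono Ioo_subset_Icc_self)
    fun q hq => by
      rw [← derivWithin_of_mem_nhds (Icc_mem_nhds hq.1 hq.2)]
      exact le_sSup_image_div_mul hbdd hS (Ioo_subset_Icc_self hq)
        (hLpos q (Ioo_subset_Icc_self hq)) (hLb q (Ioo_subset_Icc_self hq))
  have hgrowth' : b * b ^ ε ≤ (1 + ε) * (S * b ^ ε) * (Real.pi * b / Real.sqrt ε) :=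
    calc b * b ^ ε = b ^ (1 + ε) := by rw [Real.rpow_add hb, Real.rpow_one]
      _ ≤ x₁ s ^ (1 + ε) := Real.rpow_le_rpow hb.le hxs (by positivity)
      _ ≤ _ := by simpa [hx0, Real.zero_rpow (by positivity : 1 + ε ≠ 0), ← hs] using hgrowth
  have hsqrt : 0 < Real.sqrt ε := Real.sqrt_pos.2 hε
  rw [div_le_iff₀ (by positivity)]
  refine le_of_mul_le_mul_left ?_ (by positivity : 0 < b * b ^ ε)
  calc b * b ^ ε * Real.sqrt ε
      ≤ (1 + ε) * (S * b ^ ε) * (Real.pi * b / Real.sqrt ε) * Real.sqrt ε :=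
        mul_le_mul_of_nonneg_right hgrowth' hsqrt.le
    _ = b * b ^ ε * (S * ((1 + ε) * Real.pi)) := by field_simp

/-- near the reconnection (at `r_c = 0`, over half a Crow wavelength
`s = πb/√ε`) the tangent ratio `|T₁|/‖T‖ = x₁'·x₁^ε/L₀` has supremum at least
`√ε/((1+ε)π)`. -/
theorem stmt11 (ε b : ℝ) (hε : 0 < ε) (hb : 0 < b)
    (s : ℝ) (hs : s = Real.pi * b / Real.sqrt ε)
    (x₁ L₀ : ℝ → ℝ)
    (hx : ContDiffOn ℝ 1 x₁ (Set.Icc 0 s))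
    (hx0 : x₁ 0 = 0)
    (hx' : ∀ q ∈ Set.Icc 0 s, 0 ≤ derivWithin x₁ (Set.Icc 0 s) q)
    (hxs : b ≤ x₁ s)
    (hL : ContinuousOn L₀ (Set.Icc 0 s))
    (hLpos : ∀ q ∈ Set.Icc 0 s, 0 < L₀ q)
    (hLb : ∀ q ∈ Set.Icc 0 s, L₀ q ≤ b ^ ε) :
    Real.sqrt ε / ((1 + ε) * Real.pi)
      ≤ sSup ((fun q => derivWithin x₁ (Set.Icc 0 s) q * x₁ q ^ ε / L₀ q) '' Set.Icc 0 s) :=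
  stmt11_general ε b hε hb s hs x₁ L₀ hx hx0 hxs hL hLpos hLb
end

section
/- Let ε > 0, b > 0, set s = πb/√ε, let x₁ : [0,s] → ℝ be continuously differentiable with x₁(0) = 0 and x₁' ≥ 0, and let L₀ : [0,s] → ℝ be continuous, strictly positive, with L₀(q) ≤ b^ε for all q. If x₁'(q)·x₁(q)^ε / L₀(q) ≤ 1 for all q ∈ [0,s] (i.e. |T₁| ≤ ‖T‖ pointwise), then x₁(s) ≤ b·((1+ε)π/√ε)^{1/(1+ε)}. -/
/-- if the tangent ratio `|T₁|/‖T‖ = x₁'·x₁^ε/L₀` never exceeds 1 on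
`[0, πb/√ε]`, then `x₁(s) ≤ b·((1+ε)π/√ε)^{1/(1+ε)}`. -/
theorem stmt12 (ε b : ℝ) (hε : 0 < ε) (hb : 0 < b)
    (s : ℝ) (hs : s = Real.pi * b / Real.sqrt ε)
    (x₁ L₀ : ℝ → ℝ)
    (hx : ContDiffOn ℝ 1 x₁ (Set.Icc 0 s))
    (hx0 : x₁ 0 = 0)
    (hx' : ∀ q ∈ Set.Icc 0 s, 0 ≤ derivWithin x₁ (Set.Icc 0 s) q)
    (hL : ContinuousOn L₀ (Set.Icc 0 s))
    (hLpos : ∀ q ∈ Set.Icc 0 s, 0 < L₀ q)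
    (hLb : ∀ q ∈ Set.Icc 0 s, L₀ q ≤ b ^ ε)
    (hratio : ∀ q ∈ Set.Icc 0 s,
      derivWithin x₁ (Set.Icc 0 s) q * x₁ q ^ ε / L₀ q ≤ 1) :
    x₁ s ≤ b * ((1 + ε) * Real.pi / Real.sqrt ε) ^ (1 / (1 + ε)) := by
  have hsqrt : 0 < Real.sqrt ε := Real.sqrt_pos.mpr hε
  have hs0 : 0 < s := by
    rw [hs]; positivity
  have h0mem : (0 : ℝ) ∈ Set.Icc 0 s := ⟨le_rfl, hs0.le⟩
  have hsmem : s ∈ Set.Icc 0 s := ⟨hs0.le, le_rfl⟩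
  have h1ε : (0:ℝ) < 1 + ε := by linarith
  -- derivative facts
  have hd : ∀ q ∈ Set.Icc 0 s,
      HasDerivWithinAt x₁ (derivWithin x₁ (Set.Icc 0 s) q) (Set.Icc 0 s) q := fun q hq =>
    ((hx.differentiableOn one_ne_zero) q hq).hasDerivWithinAt
  -- monotone, hence nonneg
  have hmono : MonotoneOn x₁ (Set.Icc 0 s) := by
    apply monotoneOn_of_hasDerivWithinAt_nonneg (convex_Icc 0 s) (hx.continuousOn)
      (f' := fun q => derivWithin x₁ (Set.Icc 0 s) q)
    · intro q hq
      exact (hd q (interior_subset hq)).mono interior_subset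
    · intro q hq
      exact hx' q (interior_subset hq)
  have hnn : ∀ q ∈ Set.Icc 0 s, 0 ≤ x₁ q := fun q hq => by
    rw [← hx0]; exact hmono h0mem hq hq.1
  -- pointwise bound on x₁' * x₁^ε
  have hbound : ∀ q ∈ Set.Icc 0 s,
      derivWithin x₁ (Set.Icc 0 s) q * x₁ q ^ ε ≤ b ^ ε := fun q hq => by
    have h1 := (div_le_one (hLpos q hq)).mp (hratio q hq)
    exact h1.trans (hLb q hq)
  -- the function g = x₁ ^ (1+ε)
  have hg : ∀ q ∈ Set.Icc 0 s,
      HasDerivWithinAt (fun q => x₁ q ^ (1 + ε))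
        ((1 + ε) * x₁ q ^ ε * derivWithin x₁ (Set.Icc 0 s) q) (Set.Icc 0 s) q := by
    intro q hq
    have := (Real.hasDerivAt_rpow_const (x := x₁ q) (p := 1 + ε)
      (Or.inr (by linarith))).comp_hasDerivWithinAt q (hd q hq)
    simpa [add_sub_cancel_left, Function.comp_def] using this
  have hnorm : ∀ q ∈ Set.Icc 0 s,
      ‖(1 + ε) * x₁ q ^ ε * derivWithin x₁ (Set.Icc 0 s) q‖ ≤ (1 + ε) * b ^ ε := by
    intro q hq
    have hxε : 0 ≤ x₁ q ^ ε := Real.rpow_nonneg (hnn q hq) ε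
    have hge : 0 ≤ (1 + ε) * x₁ q ^ ε * derivWithin x₁ (Set.Icc 0 s) q := by
      have := hx' q hq; positivity
    rw [Real.norm_eq_abs, abs_of_nonneg hge, mul_assoc]
    have : x₁ q ^ ε * derivWithin x₁ (Set.Icc 0 s) q ≤ b ^ ε := by
      rw [mul_comm]; exact hbound q hq
    nlinarith
  have hmvt := (convex_Icc (0:ℝ) s).norm_image_sub_le_of_norm_hasDerivWithin_le
    hg hnorm h0mem hsmem
  have hgs : x₁ s ^ (1 + ε) ≤ (1 + ε) * b ^ ε * s := by
    have h0 : x₁ 0 ^ (1 + ε) = 0 := by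
      rw [hx0, Real.zero_rpow h1ε.ne']
    rw [h0, sub_zero, sub_zero, Real.norm_eq_abs, Real.norm_eq_abs,
      abs_of_nonneg (Real.rpow_nonneg (hnn s hsmem) _), abs_of_nonneg hs0.le] at hmvt
    exact hmvt
  -- conclude
  have hA : (0:ℝ) ≤ (1 + ε) * Real.pi / Real.sqrt ε := by positivity
  have hrhs : (1 + ε) * b ^ ε * s = b ^ (1 + ε) * ((1 + ε) * Real.pi / Real.sqrt ε) := by
    rw [hs, Real.rpow_add hb, Real.rpow_one]
    field_simp
  have hfinal : x₁ s ≤ ((1 + ε) * b ^ ε * s) ^ (1 / (1 + ε)) := by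
    have := Real.rpow_le_rpow (Real.rpow_nonneg (hnn s hsmem) _) hgs
      (by positivity : (0:ℝ) ≤ 1 / (1 + ε))
    rw [one_div] at this ⊢; rwa [Real.rpow_rpow_inv (hnn s hsmem) h1ε.ne'] at this
  calc x₁ s ≤ ((1 + ε) * b ^ ε * s) ^ (1 / (1 + ε)) := hfinal
    _ = b * ((1 + ε) * Real.pi / Real.sqrt ε) ^ (1 / (1 + ε)) := by
        rw [hrhs, Real.mul_rpow (Real.rpow_nonneg hb.le _) hA, one_div,
          Real.rpow_rpow_inv hb.le h1ε.ne']
end
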